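/- arXiv:2601.11022 — 5 statements merged into one kernel-verified Lean document; each statement's English description precedes it below -/
import Mathlib

section
/- Let x_1, …, x_n be pairwise distinct vectors in ℝ^d that span ℝ^d, with the zero vector in the convex hull of {x_1, …, x_n}. Let p_1, …, p_n and q_1, …, q_n be positive reals with ∑_{i=1}^n p_i = 1 and ∑_{i=1}^n q_i = 1. If for every index j with 1 ≤ j ≤ n one has ∑_{i ≠ j} (p_i − q_i) · (x_j − x_i)/‖x_j − x_i‖ = 0, then p_i = q_i for all 1 ≤ i ≤ n. In other words, a discrete probability distribution on the points x_1, …, x_n is uniquely determined by its spatial quantile index function evaluated at the support points x_1, …, x_n. -/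
/-!
Put `r = p - q`, so that `∑ rᵢ = 0`. Pairing the `j`-th quantile equation with `r j • x j` and
using the antisymmetry of its summands shows that the energy `∑ᵢⱼ rᵢ rⱼ ‖xⱼ - xᵢ‖` vanishes.

On the line, `|a - b| = a + b - 2 min a b`, and `min` is a strictly positive definite kernel on
positive reals (peel off the smallest point), so `∑ᵢⱼ rᵢ rⱼ |tⱼ - tᵢ| ≤ 0`, with equality only for
`r = 0` when the `tᵢ` are distinct. By rotation invariance, `∫ z in ball 0 1, |⟪v, z⟫|` is a fixed
multiple of `‖v‖`. Hence the energies of the projections `tᵢ = ⟪xᵢ, z⟫`, all nonpositive,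
integrate over the ball to a multiple of the vanishing energy, so they vanish for almost every
`z`, in particular for one at which the projections are distinct.
-/

open Finset MeasureTheory
open scoped RealInnerProductSpace

section MinKernel

variable {ι : Type*}

theorem sum_sum_mul_min_eq_of_forall_le [DecidableEq ι] {s : Finset ι} {t : ι → ℝ} {i₀ : ι}
    (hmin : ∀ i ∈ s, t i₀ ≤ t i) (r : ι → ℝ) :
    ∑ j ∈ s, ∑ i ∈ s, r j * r i * min (t j) (t i) =
      t i₀ * (∑ i ∈ s, r i) ^ 2 +
        ∑ j ∈ s.erase i₀, ∑ i ∈ s.erase i₀, r j * r i * min (t j - t i₀) (t i - t i₀) := by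
  have hrow : ∀ j ∈ s, ∑ i ∈ s.erase i₀, r j * r i * min (t j - t i₀) (t i - t i₀) =
      ∑ i ∈ s, r j * r i * min (t j - t i₀) (t i - t i₀) := fun j hj =>
    sum_erase s (by simp [sub_nonneg.2 (hmin j hj)])
  have hcol : ∑ i ∈ s, r i₀ * r i * min (t i₀ - t i₀) (t i - t i₀) = 0 :=
    sum_eq_zero fun i hi => by simp [sub_nonneg.2 (hmin i hi)]
  calc ∑ j ∈ s, ∑ i ∈ s, r j * r i * min (t j) (t i)
      = ∑ j ∈ s, ∑ i ∈ s, r j * r i * (t i₀ + min (t j - t i₀) (t i - t i₀)) := by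
        simp only [min_sub_sub_right, add_sub_cancel]
    _ = t i₀ * (∑ i ∈ s, r i) ^ 2 +
          ∑ j ∈ s, ∑ i ∈ s, r j * r i * min (t j - t i₀) (t i - t i₀) := by
        simp only [mul_add, sum_add_distrib, ← sum_mul, ← mul_sum]
        ring
    _ = _ := by
        rw [← sum_erase s (f := fun j => ∑ i ∈ s, r j * r i * min (t j - t i₀) (t i - t i₀)) hcol,
           sum_congr rfl fun j hj => (hrow j (mem_of_mem_erase hj)).symm]

theorem sum_sum_mul_min_nonneg (s : Finset ι) {t : ι → ℝ} (ht : ∀ i ∈ s, 0 ≤ t i) (r : ι → ℝ) :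
    0 ≤ ∑ j ∈ s, ∑ i ∈ s, r j * r i * min (t j) (t i) := by
  classical
  induction s using Finset.strongInduction generalizing t with
  | H s ih =>
    obtain rfl | hs := s.eq_empty_or_nonempty
    · simp
    obtain ⟨i₀, hi₀, hmin⟩ := s.exists_min_image t hs
    rw [sum_sum_mul_min_eq_of_forall_le hmin]
    exact add_nonneg (mul_nonneg (ht i₀ hi₀) (sq_nonneg _)) <|
      ih _ (erase_ssubset hi₀) fun i hi => sub_nonneg.2 (hmin i (mem_of_mem_erase hi))

theorem eq_zero_of_sum_sum_mul_min_eq_zero (s : Finset ι) {t : ι → ℝ} (ht : ∀ i ∈ s, 0 < t i)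
    (hinj : Set.InjOn t s) {r : ι → ℝ}
    (h : ∑ j ∈ s, ∑ i ∈ s, r j * r i * min (t j) (t i) = 0) : ∀ i ∈ s, r i = 0 := by
  classical
  induction s using Finset.strongInduction generalizing t with
  | H s ih =>
    obtain rfl | hs := s.eq_empty_or_nonempty
    · simp
    obtain ⟨i₀, hi₀, hmin⟩ := s.exists_min_image t hs
    have hpos : ∀ i ∈ s.erase i₀, 0 < t i - t i₀ := fun i hi =>
      sub_pos.2 <| (hmin i (mem_of_mem_erase hi)).lt_of_ne fun heq =>
        ne_of_mem_erase hi (hinj (mem_of_mem_erase hi) hi₀ heq.symm)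
    rw [sum_sum_mul_min_eq_of_forall_le hmin] at h
    have hrest := sum_sum_mul_min_nonneg (s.erase i₀) (fun i hi => (hpos i hi).le) r
    have hsum : ∑ i ∈ s, r i = 0 := by
      have := mul_nonneg (ht i₀ hi₀).le (sq_nonneg (∑ i ∈ s, r i))
      exact pow_eq_zero_iff two_ne_zero |>.1 <|
        (mul_eq_zero.1 (by linarith)).resolve_left (ht i₀ hi₀).ne'
    have herase : ∀ i ∈ s.erase i₀, r i = 0 :=
      ih _ (erase_ssubset hi₀) hpos (fun i hi j hj hij => hinj (mem_of_mem_erase hi)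
        (mem_of_mem_erase hj) (sub_left_injective hij)) (by simpa [hsum] using h)
    intro i hi
    obtain rfl | hne := eq_or_ne i i₀
    · rwa [← add_sum_erase s r hi, sum_eq_zero herase, add_zero] at hsum
    · exact herase i (mem_erase.2 ⟨hne, hi⟩)

theorem sum_sum_mul_abs_sub_eq (s : Finset ι) (t : ι → ℝ) {r : ι → ℝ} (hr : ∑ i ∈ s, r i = 0)
    (c : ℝ) :
    ∑ j ∈ s, ∑ i ∈ s, r j * r i * |t j - t i| =
      -2 * ∑ j ∈ s, ∑ i ∈ s, r j * r i * min (t j + c) (t i + c) := by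
  have habs : ∀ a b : ℝ, |a - b| = (a + c) + (b + c) - 2 * min (a + c) (b + c) := fun a b => by
    rw [← add_sub_add_right_eq_sub a b c, ← max_sub_min_eq_abs']
    linarith [min_add_max (a + c) (b + c)]
  have hlin : ∑ j ∈ s, ∑ i ∈ s, r j * r i * ((t j + c) + (t i + c)) = 0 := by
    simp only [mul_add, sum_add_distrib, mul_assoc, ← mul_sum, ← sum_mul, hr]
    simp
  simp only [habs, mul_sub, sum_sub_distrib, hlin, mul_left_comm _ (2 : ℝ), ← mul_sum]
  ring

theorem exists_forall_add_pos (s : Finset ι) (t : ι → ℝ) : ∃ c, ∀ i ∈ s, 0 < t i + c := by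
  obtain ⟨b, hb⟩ := (s.image t).bddBelow
  exact ⟨1 - b, fun i hi => by linarith [hb (mem_image_of_mem t hi)]⟩

theorem sum_sum_mul_abs_sub_nonpos (s : Finset ι) (t : ι → ℝ) {r : ι → ℝ}
    (hr : ∑ i ∈ s, r i = 0) : ∑ j ∈ s, ∑ i ∈ s, r j * r i * |t j - t i| ≤ 0 := by
  obtain ⟨c, hc⟩ := exists_forall_add_pos s t
  rw [sum_sum_mul_abs_sub_eq s t hr c]
  linarith [sum_sum_mul_min_nonneg s (fun i hi => (hc i hi).le) r]

theorem eq_zero_of_sum_sum_mul_abs_sub_eq_zero (s : Finset ι) {t : ι → ℝ} (hinj : Set.InjOn t s)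
    {r : ι → ℝ} (hr : ∑ i ∈ s, r i = 0) (h : ∑ j ∈ s, ∑ i ∈ s, r j * r i * |t j - t i| = 0) :
    ∀ i ∈ s, r i = 0 := by
  obtain ⟨c, hc⟩ := exists_forall_add_pos s t
  rw [sum_sum_mul_abs_sub_eq s t hr c] at h
  exact eq_zero_of_sum_sum_mul_min_eq_zero s hc
    (fun i hi j hj hij => hinj hi hj (add_right_cancel hij)) (by linarith)

end MinKernel

section Energy

variable {E : Type*} [NormedAddCommGroup E] [InnerProductSpace ℝ E] {ι : Type*} [Fintype ι]

theorem sum_sum_inner_sub_eq_zero {a : ι → ι → E} (ha : ∀ i j, a i j = -a j i)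
    (hrow : ∀ j, ∑ i, a j i = 0) (x : ι → E) : ∑ j, ∑ i, ⟪a j i, x j - x i⟫ = 0 := by
  have hcol : ∀ i, ∑ j, a j i = 0 := fun i => by
    simpa [ha _ i] using hrow i
  simp only [inner_sub_right, sum_sub_distrib]
  rw [sum_comm (f := fun j i => ⟪a j i, x i⟫)]
  simp only [← sum_inner, hrow, hcol, inner_zero_left, sum_const_zero, sub_self]

theorem sum_sum_mul_norm_sub_eq_zero (x : ι → E) (r : ι → ℝ)
    (h : ∀ j, ∑ i, (r i / ‖x j - x i‖) • (x j - x i) = 0) :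
    ∑ j, ∑ i, r j * r i * ‖x j - x i‖ = 0 := by
  have hterm : ∀ j i, r j * r i * ‖x j - x i‖ =
      ⟪r j • (r i / ‖x j - x i‖) • (x j - x i), x j - x i⟫ := fun j i => by
    rw [real_inner_smul_left, real_inner_smul_left, real_inner_self_eq_norm_sq]
    obtain h0 | h0 := eq_or_ne ‖x j - x i‖ 0
    · simp [h0]
    · field_simp
  simp only [hterm]
  refine sum_sum_inner_sub_eq_zero (fun i j => ?_) (fun j => by rw [← smul_sum, h, smul_zero]) x
  rw [norm_sub_rev (x i), ← neg_sub (x j) (x i), smul_neg, smul_neg, smul_smul, smul_smul,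
    mul_div_assoc', mul_div_assoc', mul_comm (r i)]

end Energy

section Integral

variable {E : Type*} [NormedAddCommGroup E] [InnerProductSpace ℝ E] [FiniteDimensional ℝ E]
  [MeasurableSpace E] [BorelSpace E]

noncomputable def absInnerBallIntegral (v : E) : ℝ := ∫ z in Metric.ball (0 : E) 1, |⟪v, z⟫|

theorem absInnerBallIntegral_smul {a : ℝ} (ha : 0 ≤ a) (v : E) :
    absInnerBallIntegral (a • v) = a * absInnerBallIntegral v := by
  simp only [absInnerBallIntegral, ← integral_const_mul, real_inner_smul_left, abs_mul,
    abs_of_nonneg ha]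

theorem absInnerBallIntegral_linearIsometryEquiv (e : E ≃ₗᵢ[ℝ] E) (v : E) :
    absInnerBallIntegral (e v) = absInnerBallIntegral v := by
  have hball : e ⁻¹' Metric.ball 0 1 = Metric.ball 0 1 := by
    ext z; simp
  rw [absInnerBallIntegral, ← hball, ← e.measurePreserving.setIntegral_preimage_emb
    e.toHomeomorph.measurableEmbedding]
  simp [absInnerBallIntegral, e.inner_map_map]

theorem absInnerBallIntegral_eq_of_norm_eq {v w : E} (h : ‖v‖ = ‖w‖) :
    absInnerBallIntegral v = absInnerBallIntegral w := by
  rw [← Submodule.reflection_sub h, absInnerBallIntegral_linearIsometryEquiv]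

theorem exists_absInnerBallIntegral_eq_mul_norm :
    ∃ c : ℝ, ∀ v : E, absInnerBallIntegral v = c * ‖v‖ := by
  rcases subsingleton_or_nontrivial E with hE | hE
  · exact ⟨0, fun v => by simp [absInnerBallIntegral, Subsingleton.elim v 0]⟩
  obtain ⟨w, hw⟩ := exists_norm_eq E zero_le_one
  refine ⟨absInnerBallIntegral w, fun v => ?_⟩
  rw [absInnerBallIntegral_eq_of_norm_eq (w := ‖v‖ • w) (by simp [norm_smul, hw]),
    absInnerBallIntegral_smul (norm_nonneg v), mul_comm]

theorem ae_inner_ne_zero (μ : Measure E) [μ.IsAddHaarMeasure] {v : E} (hv : v ≠ 0) :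
    ∀ᵐ z ∂μ, ⟪v, z⟫ ≠ 0 := by
  have hker : LinearMap.ker (innerₛₗ ℝ v) ≠ ⊤ := fun h =>
    hv (inner_self_eq_zero.1 (LinearMap.mem_ker.1 (h ▸ Submodule.mem_top : v ∈ _)))
  exact measure_mono_null (fun z hz => by simpa using hz) (Measure.addHaar_submodule μ _ hker)

theorem ae_injective_inner (μ : Measure E) [μ.IsAddHaarMeasure] {ι : Type*} [Finite ι]
    {x : ι → E} (hx : Function.Injective x) :
    ∀ᵐ z ∂μ, Function.Injective fun i => ⟪x i, z⟫ := by
  simp only [Function.Injective, ae_all_iff]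
  intro i j
  obtain rfl | hij := eq_or_ne i j
  · exact Filter.Eventually.of_forall fun _ _ => rfl
  filter_upwards [ae_inner_ne_zero μ (sub_ne_zero.2 (hx.ne hij))] with z hz heq
  exact absurd (by rw [inner_sub_left, heq, sub_self]) hz

theorem eq_zero_of_sum_sum_mul_norm_sub_eq_zero {ι : Type*} [Fintype ι] {x : ι → E}
    (hx : Function.Injective x) {r : ι → ℝ} (hr : ∑ i, r i = 0)
    (h : ∑ j, ∑ i, r j * r i * ‖x j - x i‖ = 0) : r = 0 := by
  set g : E → ℝ := fun z => ∑ j, ∑ i, r j * r i * |⟪x j - x i, z⟫|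
  have hg_nonpos : ∀ z, g z ≤ 0 := fun z => by
    simpa only [g, inner_sub_left] using sum_sum_mul_abs_sub_nonpos univ (⟪x ·, z⟫) hr
  have hg_int : ∀ j i, Integrable (fun z => r j * r i * |⟪x j - x i, z⟫|)
      (volume.restrict (Metric.ball (0 : E) 1)) := fun j i =>
    (ContinuousOn.integrableOn_compact (isCompact_closedBall 0 1) (by fun_prop)).mono_set
      Metric.ball_subset_closedBall
  have hg_integral : ∫ z in Metric.ball (0 : E) 1, g z = 0 := by
    obtain ⟨c, hc⟩ := exists_absInnerBallIntegral_eq_mul_norm (E := E)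
    rw [integral_finsetSum _ fun j _ => integrable_finsetSum _ fun i _ => hg_int j i]
    simp only [integral_finsetSum _ fun i _ => hg_int _ i, integral_const_mul]
    simp only [← absInnerBallIntegral.eq_def, hc, mul_left_comm _ c, ← mul_sum, h, mul_zero]
  have hg_ae : ∀ᵐ z ∂volume.restrict (Metric.ball (0 : E) 1), g z = 0 := by
    have hint : Integrable (-g) (volume.restrict (Metric.ball (0 : E) 1)) :=
      (integrable_finsetSum _ fun j _ => integrable_finsetSum _ fun i _ => hg_int j i).neg
    have := (setIntegral_eq_zero_iff_of_nonneg_ae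
      (Filter.Eventually.of_forall fun z => neg_nonneg.2 (hg_nonpos z)) hint).1
      (by rw [integral_neg, hg_integral, neg_zero])
    filter_upwards [this] with z hz
    simpa using hz
  have : (ae (volume.restrict (Metric.ball (0 : E) 1))).NeBot :=
    ae_neBot.2 (Measure.restrict_eq_zero.not.2 (Metric.measure_ball_pos volume 0 one_pos).ne')
  obtain ⟨z, hgz, hz⟩ := (hg_ae.and (ae_restrict_of_ae (ae_injective_inner volume hx))).exists
  funext i
  simp only [g, inner_sub_left] at hgz
  exact eq_zero_of_sum_sum_mul_abs_sub_eq_zero univ hz.injOn hr hgz i (mem_univ i)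

end Integral

theorem stmt_2_general {d n : ℕ} (x : Fin n → EuclideanSpace ℝ (Fin d))
    (hinj : Function.Injective x)
    (p q : Fin n → ℝ)
    (hpsum : ∑ i, p i = 1) (hqsum : ∑ i, q i = 1)
    (h : ∀ j, ∑ i ∈ Finset.univ.erase j,
        ((p i - q i) / ‖x j - x i‖) • (x j - x i) = 0) :
    p = q := by
  have hsum : ∑ i, (p - q) i = 0 := by simp [sum_sub_distrib, hpsum, hqsum]
  have hquantile : ∀ j, ∑ i, ((p - q) i / ‖x j - x i‖) • (x j - x i) = 0 := fun j => by
    rw [← sum_erase univ (a := j) (by simp)]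
    exact h j
  exact sub_eq_zero.1 <| eq_zero_of_sum_sum_mul_norm_sub_eq_zero hinj hsum <|
    sum_sum_mul_norm_sub_eq_zero x _ hquantile

/-- A discrete probability distribution on pairwise distinct points
`x 1, …, x n` spanning `ℝ^d` with `0` in their convex hull is uniquely determined by its
spatial quantile index function evaluated at the support points. -/
theorem stmt_2 {d n : ℕ} (x : Fin n → EuclideanSpace ℝ (Fin d))
    (hinj : Function.Injective x)
    (hspan : Submodule.span ℝ (Set.range x) = ⊤)
    (hzero : (0 : EuclideanSpace ℝ (Fin d)) ∈ convexHull ℝ (Set.range x))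
    (p q : Fin n → ℝ) (hp : ∀ i, 0 < p i) (hq : ∀ i, 0 < q i)
    (hpsum : ∑ i, p i = 1) (hqsum : ∑ i, q i = 1)
    (h : ∀ j, ∑ i ∈ Finset.univ.erase j,
        ((p i - q i) / ‖x j - x i‖) • (x j - x i) = 0) :
    p = q :=
  stmt_2_general x hinj p q hpsum hqsum h
end

section
/- Let Z_1, …, Z_n be points in ℝ^k that do not all lie on a single straight line (i.e., they are not all contained in any affine line of ℝ^k), and let u ∈ ℝ^k with ‖u‖ < 1. Then the function Q ↦ (1/n) ∑_{i=1}^n ( ‖Z_i − Q‖ + ⟨u, Z_i − Q⟩ ) has a unique minimizer over ℝ^k; that is, the sample geometric quantile at index u is unique. -/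
open scoped RealInnerProductSpace
open Filter

/-- If the data `Z 1, …, Z n` in `ℝ^k` do not all lie on a single straight line
and `‖u‖ < 1`, then the sample quantile loss has a unique minimizer over `ℝ^k`. -/
theorem stmt_4 {k n : ℕ} (hn : 0 < n) (Z : Fin n → EuclideanSpace ℝ (Fin k))
    (hline : ¬ ∃ a v : EuclideanSpace ℝ (Fin k), ∀ i, ∃ t : ℝ, Z i = a + t • v)
    (u : EuclideanSpace ℝ (Fin k)) (hu : ‖u‖ < 1) :
    ∃! Q : EuclideanSpace ℝ (Fin k), ∀ Q' : EuclideanSpace ℝ (Fin k),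
      (1 / (n : ℝ)) * ∑ i, (‖Z i - Q‖ + ⟪u, Z i - Q⟫) ≤
      (1 / (n : ℝ)) * ∑ i, (‖Z i - Q'‖ + ⟪u, Z i - Q'⟫) := by
  set f : EuclideanSpace ℝ (Fin k) → ℝ := fun Q => ∑ i, (‖Z i - Q‖ + ⟪u, Z i - Q⟫) with hfdef
  have hc1 : (0:ℝ) < 1 - ‖u‖ := by linarith
  -- pointwise lower bound
  have hterm : ∀ (i : Fin n) (Q : EuclideanSpace ℝ (Fin k)), (1 - ‖u‖) * ‖Z i - Q‖ ≤ ‖Z i - Q‖ + ⟪u, Z i - Q⟫ := by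
    intro i Q
    have h1 : |⟪u, Z i - Q⟫| ≤ ‖u‖ * ‖Z i - Q‖ := abs_real_inner_le_norm u (Z i - Q)
    have h2 : -(‖u‖ * ‖Z i - Q‖) ≤ ⟪u, Z i - Q⟫ := neg_le_of_abs_le h1
    nlinarith
  have htermnn : ∀ (i : Fin n) (Q : EuclideanSpace ℝ (Fin k)), (0:ℝ) ≤ ‖Z i - Q‖ + ⟪u, Z i - Q⟫ := by
    intro i Q
    have := hterm i Q
    nlinarith [norm_nonneg (Z i - Q)]
  -- existence of a minimizer of f
  have i0 : Fin n := ⟨0, hn⟩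
  have hbound : ∀ Q : EuclideanSpace ℝ (Fin k), (1 - ‖u‖) * (‖Q‖ - ‖Z i0‖) ≤ f Q := by
    intro Q
    have h1 : ‖Z i0 - Q‖ + ⟪u, Z i0 - Q⟫ ≤ f Q :=
      Finset.single_le_sum (f := fun i => ‖Z i - Q‖ + ⟪u, Z i - Q⟫)
        (fun i _ => htermnn i Q) (Finset.mem_univ i0)
    have h2 : ‖Q‖ - ‖Z i0‖ ≤ ‖Z i0 - Q‖ := by
      have := norm_sub_norm_le Q (Z i0)
      have h3 : ‖Q - Z i0‖ = ‖Z i0 - Q‖ := norm_sub_rev _ _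
      linarith
    have h4 := hterm i0 Q
    nlinarith
  have hcont : Continuous f := by
    apply continuous_finset_sum
    intro i _
    exact ((continuous_const.sub continuous_id).norm).add
      (continuous_const.inner (continuous_const.sub continuous_id))
  have hlim : Tendsto f (cocompact (EuclideanSpace ℝ (Fin k))) atTop := by
    apply tendsto_atTop_mono hbound
    have h1 : Tendsto (fun Q : EuclideanSpace ℝ (Fin k) => ‖Q‖ - ‖Z i0‖) (cocompact (EuclideanSpace ℝ (Fin k))) atTop := by
      simp only [sub_eq_add_neg]
      exact tendsto_atTop_add_const_right _ _ tendsto_norm_cocompact_atTop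
    exact h1.const_mul_atTop hc1
  obtain ⟨Q, hQ⟩ : ∃ Q : EuclideanSpace ℝ (Fin k), ∀ Q', f Q ≤ f Q' := hcont.exists_forall_le hlim
  -- uniqueness via strict convexity
  have key : ∀ Q1 Q2 : EuclideanSpace ℝ (Fin k), (∀ Q', f Q1 ≤ f Q') → (∀ Q', f Q2 ≤ f Q') → Q1 = Q2 := by
    intro Q1 Q2 h1 h2
    by_contra hne
    have hQeq : f Q1 = f Q2 := le_antisymm (h1 Q2) (h2 Q1)
    set Qm : EuclideanSpace ℝ (Fin k) := (1/2 : ℝ) • (Q1 + Q2) with hQm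
    have hmid : ∀ i, Z i - Qm = (1/2 : ℝ) • ((Z i - Q1) + (Z i - Q2)) := by
      intro i; rw [hQm]; module
    -- midpoint term bound
    have hmle : ∀ i, ‖Z i - Qm‖ + ⟪u, Z i - Qm⟫ ≤
        (1/2 : ℝ) * ((‖Z i - Q1‖ + ⟪u, Z i - Q1⟫) + (‖Z i - Q2‖ + ⟪u, Z i - Q2⟫)) := by
      intro i
      rw [hmid i]
      rw [norm_smul, real_inner_smul_right, inner_add_right]
      have := norm_add_le (Z i - Q1) (Z i - Q2)
      simp only [Real.norm_eq_abs]
      rw [abs_of_pos (by norm_num : (0:ℝ) < 1/2)]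
      nlinarith
    have hSR : ∀ i, SameRay ℝ (Z i - Q1) (Z i - Q2) := by
      by_contra h
      push_neg at h
      obtain ⟨j, hj⟩ := h
      have hjlt : ‖Z j - Qm‖ + ⟪u, Z j - Qm⟫ <
          (1/2 : ℝ) * ((‖Z j - Q1‖ + ⟪u, Z j - Q1⟫) + (‖Z j - Q2‖ + ⟪u, Z j - Q2⟫)) := by
        rw [hmid j]
        rw [norm_smul, real_inner_smul_right, inner_add_right]
        have hstrict : ‖(Z j - Q1) + (Z j - Q2)‖ < ‖Z j - Q1‖ + ‖Z j - Q2‖ :=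
          not_sameRay_iff_norm_add_lt.mp hj
        simp only [Real.norm_eq_abs]
        rw [abs_of_pos (by norm_num : (0:ℝ) < 1/2)]
        nlinarith
      have hsum : f Qm < ∑ i, (1/2 : ℝ) *
          ((‖Z i - Q1‖ + ⟪u, Z i - Q1⟫) + (‖Z i - Q2‖ + ⟪u, Z i - Q2⟫)) := by
        apply Finset.sum_lt_sum (fun i _ => hmle i) ⟨j, Finset.mem_univ j, hjlt⟩
      have hsum2 : ∑ i, (1/2 : ℝ) *
          ((‖Z i - Q1‖ + ⟪u, Z i - Q1⟫) + (‖Z i - Q2‖ + ⟪u, Z i - Q2⟫)) =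
          (1/2 : ℝ) * (f Q1 + f Q2) := by
        rw [hfdef]
        rw [← Finset.mul_sum, Finset.sum_add_distrib]
      rw [hsum2, ← hQeq] at hsum
      have : f Q1 ≤ f Qm := h1 Qm
      linarith
    -- all points on the line through Q1 and Q2
    apply hline
    refine ⟨Q1, Q2 - Q1, fun i => ?_⟩
    rcases hSR i with h | h | ⟨r1, r2, hr1, hr2, hr⟩
    · exact ⟨0, by rw [zero_smul, add_zero, ← sub_eq_zero]; exact h⟩
    · refine ⟨1, ?_⟩
      rw [one_smul]
      have : Z i = Q2 := by rwa [sub_eq_zero] at h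
      rw [this]; abel
    · by_cases hrr : r1 = r2
      · exfalso
        apply hne
        subst hrr
        have h6 := smul_right_injective (EuclideanSpace ℝ (Fin k)) (ne_of_gt hr1) hr
        rwa [sub_right_inj] at h6
      · refine ⟨(-r2) / (r1 - r2), ?_⟩
        have hc : r1 - r2 ≠ 0 := sub_ne_zero.mpr hrr
        have h2 : (r1 - r2) • (Z i - Q1) = (-r2) • (Q2 - Q1) := by
          linear_combination (norm := module) hr
        have h3 : Z i - Q1 = ((-r2) / (r1 - r2)) • (Q2 - Q1) := by
          have h4 := congrArg (fun w : EuclideanSpace ℝ (Fin k) => (r1 - r2)⁻¹ • w) h2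
          simp only [inv_smul_smul₀ hc, smul_smul] at h4
          rw [h4, div_eq_inv_mul]
        rw [← h3]; abel
  have hpos : (0:ℝ) < 1 / (n:ℝ) := by positivity
  refine ⟨Q, fun Q' => mul_le_mul_of_nonneg_left (hQ Q') (le_of_lt hpos), fun Q' hQ' => ?_⟩
  exact key Q' Q (fun Q'' => le_of_mul_le_mul_left (hQ' Q'') hpos) hQ
end

section
/- Let F be a Borel probability measure on ℝ^d whose support is not contained in any straight line of ℝ^d, and assume F({z}) = 0 for the given point z ∈ ℝ^d. Then the spatial quantile index U_F(z) = E_{X∼F}[(z − X)/‖z − X‖] satisfies ‖U_F(z)‖ < 1; that is, the quantile index function takes values in the open Euclidean unit ball. -/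
open scoped Classical

open MeasureTheory

/- The integrand `s(x)` has norm at most `1`, so in the strictly convex space `ℝ^d` its mean has
norm `< 1` unless `s` is a.e. equal to a constant `c`. But `z - x = ‖z - x‖ • s(x)`, so in that
case almost every `x` lies on the line `z + ℝ c`, which the hypothesis on lines forbids. -/

section SpatialSign

variable {E : Type*} [NormedAddCommGroup E] [NormedSpace ℝ E] [DecidableEq E]

noncomputable def spatialSign (z x : E) : E :=
  if x = z then 0 else ‖z - x‖⁻¹ • (z - x)

theorem norm_spatialSign_le_one (z x : E) : ‖spatialSign z x‖ ≤ 1 := by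
  unfold spatialSign
  split_ifs with hx
  · simp
  · have hzx : ‖z - x‖ ≠ 0 := norm_ne_zero_iff.mpr (sub_ne_zero.mpr (Ne.symm hx))
    rw [norm_smul, norm_inv, norm_norm, inv_mul_cancel₀ hzx]

theorem norm_smul_spatialSign (z x : E) : ‖z - x‖ • spatialSign z x = z - x := by
  unfold spatialSign
  split_ifs with hx
  · simp [hx]
  · have hzx : ‖z - x‖ ≠ 0 := norm_ne_zero_iff.mpr (sub_ne_zero.mpr (Ne.symm hx))
    rw [smul_smul, mul_inv_cancel₀ hzx, one_smul]

theorem eq_add_smul_of_spatialSign_eq {z x c : E} (h : spatialSign z x = c) :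
    x = z + (-‖z - x‖) • c := by
  rw [neg_smul, ← h, norm_smul_spatialSign]
  abel

theorem measure_line_eq_one_of_spatialSign_ae_eq [MeasurableSpace E] {μ : Measure E}
    [IsProbabilityMeasure μ] {z c : E} (h : spatialSign z =ᵐ[μ] Function.const E c) :
    μ {x | ∃ t : ℝ, x = z + t • c} = 1 := by
  have hline : ∀ᵐ x ∂μ, x ∈ {x : E | ∃ t : ℝ, x = z + t • c} := by
    filter_upwards [h] with x hx
    exact ⟨_, eq_add_smul_of_spatialSign_eq hx⟩
  rw [measure_congr (ae_eq_univ.mpr (ae_iff.mp hline)), measure_univ]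

end SpatialSign

theorem stmt_6_general {d : ℕ} (F : Measure (EuclideanSpace ℝ (Fin d)))
    [IsProbabilityMeasure F]
    (hline : ∀ a v : EuclideanSpace ℝ (Fin d),
      F {x : EuclideanSpace ℝ (Fin d) | ∃ t : ℝ, x = a + t • v} < 1)
    (z : EuclideanSpace ℝ (Fin d)) :
    ‖∫ x, (if x = z then 0 else ‖z - x‖⁻¹ • (z - x)) ∂F‖ < 1 := by
  change ‖∫ x, spatialSign z x ∂F‖ < 1
  rcases ae_eq_const_or_norm_integral_lt_of_norm_le_const
      (ae_of_all F (norm_spatialSign_le_one z)) with hconst | hlt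
  · exact absurd (measure_line_eq_one_of_spatialSign_ae_eq hconst) (hline z _).ne
  · simpa using hlt

/-- If the support of a Borel probability measure `F` on `ℝ^d` is not contained
in any straight line (equivalently, every straight line has `F`-measure `< 1`) and
`F {z} = 0`, then the spatial quantile index `U_F(z) = E_{X∼F}[(z - X)/‖z - X‖]` has norm
`< 1`. -/
theorem stmt_6 {d : ℕ} (F : Measure (EuclideanSpace ℝ (Fin d)))
    [IsProbabilityMeasure F]
    (hline : ∀ a v : EuclideanSpace ℝ (Fin d),
      F {x : EuclideanSpace ℝ (Fin d) | ∃ t : ℝ, x = a + t • v} < 1)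
    (z : EuclideanSpace ℝ (Fin d)) (hz : F {z} = 0) :
    ‖∫ x, (if x = z then 0 else ‖z - x‖⁻¹ • (z - x)) ∂F‖ < 1 :=
  stmt_6_general F hline z
end

section
/- Let Z_1, Z_2, … be i.i.d. random vectors in ℝ^k with common distribution F, where F is absolutely continuous with respect to Lebesgue measure and its support is not contained in any straight line. Fix u ∈ ℝ^k with ‖u‖ < 1, and let Q(u) be the unique minimizer over Q ∈ ℝ^k of E_{Z∼F}[ ‖Z − Q‖ + ⟨u, Z − Q⟩ ]. If Q̂_n(u) denotes, for each n, a minimizer over Q ∈ ℝ^k of (1/n) ∑_{i=1}^n ( ‖Z_i − Q‖ + ⟨u, Z_i − Q⟩ ), then Q̂_n(u) converges almost surely to Q(u) as n → ∞. -/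
/-!
The sample risks `Q ↦ (1/n) ∑ ‖Zᵢ - Q‖ + ⟪u, Zᵢ - Q⟫` are convex and share the Lipschitz constant
`1 + ‖u‖`. By the strong law they converge almost surely to the population risk at every point of
a countable dense set, hence, by equicontinuity, locally uniformly everywhere. Uniform convergence
on a small sphere around the strict minimiser `Q` keeps the sample risks above their value at `Q`
on that sphere, and by convexity a minimiser of a sample risk cannot lie outside it.
-/

open MeasureTheory ProbabilityTheory Filter Set Topology Finset
open scoped RealInnerProductSpace NNReal

theorem ConvexOn.finset_sum {E ι : Type*} [AddCommGroup E] [Module ℝ E] {s : Set E}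
    {f : ι → E → ℝ} (hs : Convex ℝ s) (t : Finset ι) (hf : ∀ i ∈ t, ConvexOn ℝ s (f i)) :
    ConvexOn ℝ s fun x => ∑ i ∈ t, f i x := by
  classical
  induction t using Finset.induction_on with
  | empty => simpa using convexOn_const 0 hs
  | insert j t hj ih =>
    simp_rw [sum_insert hj]
    exact (hf j (mem_insert_self j t)).add (ih fun i hi => hf i (mem_insert_of_mem hi))

theorem LipschitzWith.finset_average {α ι : Type*} [PseudoMetricSpace α] {K : ℝ≥0}
    {f : ι → α → ℝ} (s : Finset ι) (hf : ∀ i ∈ s, LipschitzWith K (f i)) :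
    LipschitzWith K fun x => (1 / (#s : ℝ)) * ∑ i ∈ s, f i x := by
  refine LipschitzWith.of_dist_le_mul fun x y => ?_
  rcases s.eq_empty_or_nonempty with rfl | hs
  · simpa using mul_nonneg K.2 dist_nonneg
  calc dist ((1 / (#s : ℝ)) * ∑ i ∈ s, f i x) ((1 / (#s : ℝ)) * ∑ i ∈ s, f i y)
      = (1 / (#s : ℝ)) * |∑ i ∈ s, (f i x - f i y)| := by
        rw [Real.dist_eq, ← mul_sub, ← sum_sub_distrib, abs_mul, abs_of_pos (by positivity)]
    _ ≤ (1 / (#s : ℝ)) * ∑ _i ∈ s, K * dist x y := by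
        gcongr
        refine (abs_sum_le_sum_abs _ _).trans (sum_le_sum fun i hi => ?_)
        rw [← Real.dist_eq]
        exact (hf i hi).dist_le_mul x y
    _ = K * dist x y := by
        rw [sum_const, nsmul_eq_mul]
        field_simp

theorem LipschitzWith.integral_param {α β : Type*} [MeasurableSpace α] [PseudoMetricSpace β]
    {μ : Measure α} [IsProbabilityMeasure μ] {K : ℝ≥0} {f : β → α → ℝ}
    (hf : ∀ a, LipschitzWith K (f · a)) (hint : ∀ x, Integrable (f x) μ) :
    LipschitzWith K fun x => ∫ a, f x a ∂μ := by
  refine LipschitzWith.of_dist_le_mul fun x y => ?_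
  rw [dist_eq_norm, ← integral_sub (hint x) (hint y)]
  simpa using norm_integral_le_of_norm_le_const (μ := μ)
    (ae_of_all _ fun a => (dist_eq_norm (f x a) (f y a)).symm.trans_le ((hf a).dist_le_mul x y))

theorem MeasureTheory.Integrable.of_lipschitzWith_param {α β : Type*} [MeasurableSpace α]
    [PseudoMetricSpace β] {μ : Measure α} [IsFiniteMeasure μ] {K : ℝ≥0} {f : β → α → ℝ}
    (hf : ∀ a, LipschitzWith K (f · a)) {x y : β} (hx : Integrable (f x) μ)
    (hy : AEStronglyMeasurable (f y) μ) : Integrable (f y) μ := by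
  refine (hx.norm.add (integrable_const (K * dist x y))).mono' hy (ae_of_all _ fun a => ?_)
  calc ‖f y a‖ ≤ ‖f x a‖ + ‖f y a - f x a‖ := norm_le_norm_add_norm_sub' _ _
    _ ≤ ‖f x a‖ + K * dist x y := by
        rw [← dist_eq_norm, dist_comm x]
        gcongr
        exact (hf a).dist_le_mul y x

theorem ae_tendsto_average_comp_of_iIndepFun {Ω E : Type*} [MeasurableSpace Ω]
    [MeasurableSpace E] {P : Measure Ω} {Z : ℕ → Ω → E} (hmeas : ∀ i, Measurable (Z i))
    (hindep : iIndepFun Z P) {F : Measure E} (hlaw : ∀ i, P.map (Z i) = F) {φ : E → ℝ}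
    (hφ : Measurable φ) (hint : Integrable φ F) :
    ∀ᵐ ω ∂P, Tendsto (fun n : ℕ => (∑ i ∈ range n, φ (Z i ω)) / n) atTop (𝓝 (∫ z, φ z ∂F)) := by
  have hident : ∀ i, IdentDistrib (φ ∘ Z i) (φ ∘ Z 0) P P := fun i =>
    (IdentDistrib.mk (hmeas i).aemeasurable (hmeas 0).aemeasurable (by rw [hlaw i, hlaw 0])).comp hφ
  have hint0 : Integrable (φ ∘ Z 0) P :=
    (integrable_map_measure hφ.aestronglyMeasurable (hmeas 0).aemeasurable).1 (hlaw 0 ▸ hint)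
  have hmean : ∫ ω, φ (Z 0 ω) ∂P = ∫ z, φ z ∂F := by
    rw [← hlaw 0, integral_map (hmeas 0).aemeasurable hφ.aestronglyMeasurable]
  simpa only [Function.comp_apply, hmean] using strong_law_ae_real (fun i => φ ∘ Z i) hint0
    (fun i j hij => (hindep.comp (fun _ => φ) fun _ => hφ).indepFun hij) hident

theorem Equicontinuous.tendstoLocallyUniformly_of_dense {ι X α : Type*} [TopologicalSpace X]
    [LocallyCompactSpace X] [UniformSpace α] {l : Filter ι} {F : ι → X → α} {f : X → α}
    {D : Set X} (hF : Equicontinuous F) (hf : Continuous f) (hD : Dense D)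
    (h : ∀ x ∈ D, Tendsto (F · x) l (𝓝 (f x))) : TendstoLocallyUniformly F f l := by
  have hpt : Tendsto F l (𝓝 f) :=
    tendsto_pi_nhds.2 fun x => closure_minimal h (hF.isClosed_setOfPred_tendsto hf)
      (hD.closure_eq ▸ mem_univ x)
  have hcover : ⋃₀ {K : Set X | IsCompact K} = univ :=
    eq_univ_of_forall fun x => mem_sUnion.2 ⟨{x}, isCompact_singleton, rfl⟩
  have hunif := (EquicontinuousOn.tendsto_uniformOnFun_iff_pi (fun _ hK => hK) hcover
    (fun K _ => hF.equicontinuousOn K) l f).2 hpt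
  exact tendstoLocallyUniformly_iff_forall_isCompact.2 fun K hK =>
    UniformOnFun.tendsto_iff_tendstoUniformlyOn.1 hunif K hK

theorem tendsto_of_isMinOn_of_tendstoLocallyUniformly {E ι : Type*} [NormedAddCommGroup E]
    [NormedSpace ℝ E] [ProperSpace E] [Nontrivial E] {l : Filter ι} {f : ι → E → ℝ}
    {g : E → ℝ} {x : ι → E} {Q : E} (hf : ∀ i, ConvexOn ℝ univ (f i))
    (hfg : TendstoLocallyUniformly f g l) (hg : Continuous g) (hQ : ∀ y ≠ Q, g Q < g y)
    (hx : ∀ i, IsMinOn (f i) univ (x i)) : Tendsto x l (𝓝 Q) := by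
  refine Metric.tendsto_nhds.2 fun ε hε => ?_
  obtain ⟨y₀, hy₀, hy₀min⟩ := (isCompact_sphere Q ε).exists_isMinOn
    (NormedSpace.sphere_nonempty.2 hε.le) hg.continuousOn
  have hgap : g Q < g y₀ := hQ y₀ (Metric.ne_of_mem_sphere hy₀ hε.ne')
  have hunif := Metric.tendstoUniformlyOn_iff.1
    (tendstoLocallyUniformly_iff_forall_isCompact.1 hfg _ (isCompact_closedBall Q ε))
    ((g y₀ - g Q) / 2) (by linarith)
  filter_upwards [hunif] with i hi
  by_contra! hfar
  have hd : 0 < dist (x i) Q := hε.trans_le hfar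
  set W := AffineMap.lineMap Q (x i) (ε / dist (x i) Q)
  have hW : W ∈ Metric.sphere Q ε := by
    rw [Metric.mem_sphere, dist_lineMap_left, Real.norm_of_nonneg (by positivity),
      dist_comm Q, div_mul_cancel₀ _ hd.ne']
  have hfW : f i W ≤ f i Q :=
    ((hf i).le_max_of_mem_segment (mem_univ _) (mem_univ _)
      (lineMap_mem_segment ℝ _ _ ⟨by positivity, div_le_one_of_le₀ hfar hd.le⟩)).trans
      (max_le le_rfl (hx i (mem_univ Q)))
  have hWQ := hi W (Metric.sphere_subset_closedBall hW)
  have hQQ := hi Q (Metric.mem_closedBall_self hε.le)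
  rw [Real.dist_eq, abs_lt] at hWQ hQQ
  linarith [isMinOn_iff.1 hy₀min W hW]

section GeometricQuantile

variable {E : Type*} [NormedAddCommGroup E] [InnerProductSpace ℝ E]

def geomLoss (u t : E) : ℝ := ‖t‖ + ⟪u, t⟫

noncomputable def geomRisk [MeasurableSpace E] (u : E) (F : Measure E) (Q : E) : ℝ :=
  ∫ z, geomLoss u (z - Q) ∂F

noncomputable def sampleGeomRisk (u : E) (z : ℕ → E) (n : ℕ) (Q : E) : ℝ :=
  (1 / (n : ℝ)) * ∑ i ∈ range n, geomLoss u (z i - Q)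

theorem lipschitzWith_geomLoss (u : E) : LipschitzWith (1 + ‖u‖₊) (geomLoss u) := by
  have h : ‖innerSL ℝ u‖₊ = ‖u‖₊ := NNReal.eq (innerSL_apply_norm ℝ u)
  exact h ▸ lipschitzWith_one_norm.add (innerSL ℝ u).lipschitz

theorem lipschitzWith_geomLoss_sub (u z : E) :
    LipschitzWith (1 + ‖u‖₊) fun Q => geomLoss u (z - Q) := by
  have h := (lipschitzWith_geomLoss u).comp ((LipschitzWith.const z).sub LipschitzWith.id)
  rwa [zero_add, mul_one] at h

theorem continuous_geomLoss_sub_right (u Q : E) : Continuous fun z => geomLoss u (z - Q) :=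
  (lipschitzWith_geomLoss u).continuous.comp (continuous_sub_right Q)

theorem convexOn_geomLoss (u : E) : ConvexOn ℝ univ (geomLoss u) :=
  (convexOn_norm convex_univ).add ((innerₛₗ ℝ u).convexOn convex_univ)

theorem convexOn_geomLoss_sub (u z : E) : ConvexOn ℝ univ fun Q => geomLoss u (z - Q) :=
  (convexOn_geomLoss u).comp_affineMap (AffineEquiv.constVSub ℝ z).toAffineMap

theorem lipschitzWith_sampleGeomRisk (u : E) (z : ℕ → E) (n : ℕ) :
    LipschitzWith (1 + ‖u‖₊) (sampleGeomRisk u z n) := by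
  have h := LipschitzWith.finset_average (range n) fun i _ => lipschitzWith_geomLoss_sub u (z i)
  rwa [card_range] at h

theorem convexOn_sampleGeomRisk (u : E) (z : ℕ → E) (n : ℕ) :
    ConvexOn ℝ univ (sampleGeomRisk u z n) :=
  (ConvexOn.finset_sum convex_univ (range n) fun i _ => convexOn_geomLoss_sub u (z i)).smul
    (by positivity)

variable [MeasurableSpace E] [OpensMeasurableSpace E] {u : E} {F : Measure E}

theorem integrable_geomLoss_sub [IsFiniteMeasure F] {Q : E}
    (hQ : Integrable (fun z => geomLoss u (z - Q)) F) (Q' : E) :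
    Integrable (fun z => geomLoss u (z - Q')) F :=
  Integrable.of_lipschitzWith_param (f := fun Q z => geomLoss u (z - Q))
    (fun z => lipschitzWith_geomLoss_sub u z) hQ
    (continuous_geomLoss_sub_right u Q').aestronglyMeasurable

theorem lipschitzWith_geomRisk [IsProbabilityMeasure F] {Q : E}
    (hQ : Integrable (fun z => geomLoss u (z - Q)) F) :
    LipschitzWith (1 + ‖u‖₊) (geomRisk u F) :=
  LipschitzWith.integral_param (fun z => lipschitzWith_geomLoss_sub u z)
    (integrable_geomLoss_sub hQ)

/-- Without a first moment every risk is the junk value `0`, so every point is a minimiser. -/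
theorem integrable_geomLoss_sub_of_forall_isMinOn_eq [Nontrivial E] [IsFiniteMeasure F] {Q : E}
    (huniq : ∀ y, IsMinOn (geomRisk u F) univ y → y = Q) :
    Integrable (fun z => geomLoss u (z - Q)) F := by
  by_contra hQ
  have hzero (y : E) : geomRisk u F y = 0 :=
    integral_undef fun hy => hQ (integrable_geomLoss_sub hy Q)
  obtain ⟨y, hy⟩ := exists_ne Q
  exact hy (huniq y fun y' _ => ((hzero y).trans (hzero y').symm).le)

theorem ae_tendsto_sampleGeomRisk {Ω : Type*} [MeasurableSpace Ω] {P : Measure Ω}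
    {Z : ℕ → Ω → E} (hmeas : ∀ i, Measurable (Z i)) (hindep : iIndepFun Z P)
    (hlaw : ∀ i, P.map (Z i) = F) {Q : E} (hQ : Integrable (fun z => geomLoss u (z - Q)) F) :
    ∀ᵐ ω ∂P, Tendsto (fun n => sampleGeomRisk u (Z · ω) n Q) atTop (𝓝 (geomRisk u F Q)) := by
  simpa only [sampleGeomRisk, geomRisk, one_div_mul_eq_div] using
    ae_tendsto_average_comp_of_iIndepFun hmeas hindep hlaw
      (continuous_geomLoss_sub_right u Q).measurable hQ

end GeometricQuantile

theorem stmt_8_general {k : ℕ} {Ω : Type*} [MeasurableSpace Ω]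
    (P : Measure Ω)
    (Z : ℕ → Ω → EuclideanSpace ℝ (Fin k))
    (hmeas : ∀ i, Measurable (Z i))
    (hindep : iIndepFun Z P)
    (F : Measure (EuclideanSpace ℝ (Fin k))) [IsProbabilityMeasure F]
    (hlaw : ∀ i, Measure.map (Z i) P = F)
    (u : EuclideanSpace ℝ (Fin k))
    (Q : EuclideanSpace ℝ (Fin k))
    (hQmin : ∀ Q' : EuclideanSpace ℝ (Fin k),
      ∫ z, (‖z - Q‖ + ⟪u, z - Q⟫) ∂F ≤ ∫ z, (‖z - Q'‖ + ⟪u, z - Q'⟫) ∂F)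
    (hQuniq : ∀ Q'' : EuclideanSpace ℝ (Fin k),
      (∀ Q' : EuclideanSpace ℝ (Fin k),
        ∫ z, (‖z - Q''‖ + ⟪u, z - Q''⟫) ∂F ≤ ∫ z, (‖z - Q'‖ + ⟪u, z - Q'⟫) ∂F) → Q'' = Q)
    (Qhat : ℕ → Ω → EuclideanSpace ℝ (Fin k))
    (hQhat : ∀ (n : ℕ) (ω : Ω), ∀ Q' : EuclideanSpace ℝ (Fin k),
      (1 / (n : ℝ)) * ∑ i ∈ Finset.range n, (‖Z i ω - Qhat n ω‖ + ⟪u, Z i ω - Qhat n ω⟫) ≤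
      (1 / (n : ℝ)) * ∑ i ∈ Finset.range n, (‖Z i ω - Q'‖ + ⟪u, Z i ω - Q'⟫)) :
    ∀ᵐ ω ∂P, Tendsto (fun n => Qhat n ω) atTop (nhds Q) := by
  rcases subsingleton_or_nontrivial (EuclideanSpace ℝ (Fin k)) with hE | hE
  · exact ae_of_all _ fun ω => by simpa only [Subsingleton.elim _ Q] using tendsto_const_nhds
  have hmin : IsMinOn (geomRisk u F) univ Q := fun Q' _ => hQmin Q'
  have huniq : ∀ y, IsMinOn (geomRisk u F) univ y → y = Q :=
    fun y hy => hQuniq y fun Q' => hy (mem_univ Q')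
  have hint := integrable_geomLoss_sub_of_forall_isMinOn_eq huniq
  have hstrict : ∀ y ≠ Q, geomRisk u F Q < geomRisk u F y := fun y hy =>
    lt_of_not_ge fun hle => hy (huniq y fun Q' _ => hle.trans (hmin (mem_univ Q')))
  obtain ⟨D, hDcount, hDdense⟩ :=
    TopologicalSpace.exists_countable_dense (EuclideanSpace ℝ (Fin k))
  have hD : ∀ᵐ ω ∂P, ∀ p ∈ D,
      Tendsto (fun n => sampleGeomRisk u (Z · ω) n p) atTop (𝓝 (geomRisk u F p)) :=
    (ae_ball_iff hDcount).2 fun p _ =>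
      ae_tendsto_sampleGeomRisk hmeas hindep hlaw (integrable_geomLoss_sub hint p)
  filter_upwards [hD] with ω hω
  have hequi : Equicontinuous (sampleGeomRisk u (Z · ω)) :=
    (LipschitzWith.uniformEquicontinuous _ _
      (lipschitzWith_sampleGeomRisk u (Z · ω))).equicontinuous
  have hcont := (lipschitzWith_geomRisk hint).continuous
  exact tendsto_of_isMinOn_of_tendstoLocallyUniformly (convexOn_sampleGeomRisk u (Z · ω))
    (hequi.tendstoLocallyUniformly_of_dense hcont hDdense hω) hcont hstrict
    fun n Q' _ => hQhat n ω Q'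

/-- Asymptotic convergence of sample geometric quantiles: For i.i.d. data
`Z 0, Z 1, …` with common law `F` absolutely continuous w.r.t. Lebesgue measure and support
not contained in a straight line, and `‖u‖ < 1`, any sequence of sample geometric quantiles
at `u` converges almost surely to the (unique) population geometric quantile at `u`. -/
theorem stmt_8 {k : ℕ} {Ω : Type*} [MeasurableSpace Ω]
    (P : Measure Ω) [IsProbabilityMeasure P]
    (Z : ℕ → Ω → EuclideanSpace ℝ (Fin k))
    (hmeas : ∀ i, Measurable (Z i))
    (hindep : iIndepFun Z P)
    (F : Measure (EuclideanSpace ℝ (Fin k))) [IsProbabilityMeasure F]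
    (hlaw : ∀ i, Measure.map (Z i) P = F)
    (habs : F ≪ volume)
    (hline : ∀ a v : EuclideanSpace ℝ (Fin k),
      F {x : EuclideanSpace ℝ (Fin k) | ∃ t : ℝ, x = a + t • v} < 1)
    (u : EuclideanSpace ℝ (Fin k)) (hu : ‖u‖ < 1)
    (Q : EuclideanSpace ℝ (Fin k))
    (hQmin : ∀ Q' : EuclideanSpace ℝ (Fin k),
      ∫ z, (‖z - Q‖ + ⟪u, z - Q⟫) ∂F ≤ ∫ z, (‖z - Q'‖ + ⟪u, z - Q'⟫) ∂F)
    (hQuniq : ∀ Q'' : EuclideanSpace ℝ (Fin k),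
      (∀ Q' : EuclideanSpace ℝ (Fin k),
        ∫ z, (‖z - Q''‖ + ⟪u, z - Q''⟫) ∂F ≤ ∫ z, (‖z - Q'‖ + ⟪u, z - Q'⟫) ∂F) → Q'' = Q)
    (Qhat : ℕ → Ω → EuclideanSpace ℝ (Fin k))
    (hQhat : ∀ (n : ℕ) (ω : Ω), ∀ Q' : EuclideanSpace ℝ (Fin k),
      (1 / (n : ℝ)) * ∑ i ∈ Finset.range n, (‖Z i ω - Qhat n ω‖ + ⟪u, Z i ω - Qhat n ω⟫) ≤
      (1 / (n : ℝ)) * ∑ i ∈ Finset.range n, (‖Z i ω - Q'‖ + ⟪u, Z i ω - Q'⟫)) :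
    ∀ᵐ ω ∂P, Tendsto (fun n => Qhat n ω) atTop (nhds Q) :=
  stmt_8_general P Z hmeas hindep F hlaw u Q hQmin hQuniq Qhat hQhat
end

section
/- Let a_1, …, a_n and s_1, …, s_n be vectors in ℝ^d with means A = (1/n) ∑ a_i and S = (1/n) ∑ s_i, and define σ_a² = (1/n) ∑_{i=1}^n ‖a_i − A‖², σ_s² = (1/n) ∑_{i=1}^n ‖s_i − S‖², and σ_as = (1/n) ∑_{i=1}^n ⟨a_i − A, s_i − S⟩. Let β ∈ ℝ, 1 ≤ b ≤ n, let B be a uniformly random subset of {1, …, n} of size b, and let μ̂ = (1/b) ∑_{i∈B} a_i + β ( S − (1/b) ∑_{i∈B} s_i ). Then E[ ‖μ̂ − A‖² ] = (1/b) · ((n − b)/(n − 1)) · ( σ_a² + β² σ_s² − 2β σ_as ). -/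
open scoped RealInnerProductSpace
open Finset

/-!
Put `c i = (a i - A) - β • (s i - S)`, so that `μ̂ - A = b⁻¹ • ∑ i ∈ B, c i` and `∑ i, c i = 0`.
The latter gives `‖∑ i ∈ B, c i‖² = -∑ i ∈ B, ∑ j ∉ B, ⟪c i, c j⟫`. An ordered pair `i ≠ j`
has `i ∈ B`, `j ∉ B` for exactly `(n-2).choose (b-1)` of the sets `B`, and `∑ j ≠ i, c j = -c i`,
so the sum over all `B` is `(n-2).choose (b-1) * ∑ i, ‖c i‖²`. Finally
`(n-2).choose (b-1) * (n-1) * n = n.choose b * b * (n-b)`.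
-/

theorem card_powersetCard_filter_mem_and_notMem {ι : Type*} [Fintype ι] [DecidableEq ι]
    {i j : ι} (hij : i ≠ j) {b : ℕ} (hb : 1 ≤ b) :
    #{B ∈ powersetCard b (univ : Finset ι) | i ∈ B ∧ j ∉ B} =
      (Fintype.card ι - 2).choose (b - 1) := by
  have hcard : #((univ.erase i).erase j) = Fintype.card ι - 2 := by
    rw [card_erase_of_mem (by simp [hij.symm]), card_erase_of_mem (mem_univ i), card_univ]
    omega
  rw [← hcard, ← card_powersetCard]
  apply card_nbij' (·.erase i) (insert i)
  · intro B hB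
    simp only [mem_coe, mem_filter, mem_powersetCard] at hB ⊢
    refine ⟨fun x hx => ?_, by rw [card_erase_of_mem hB.2.1, hB.1.2]⟩
    grind
  · intro C hC
    simp only [mem_coe, mem_filter, mem_powersetCard] at hC ⊢
    have hiC : i ∉ C := fun h => by simpa using hC.1 h
    refine ⟨⟨subset_univ _, by rw [card_insert_of_notMem hiC, hC.2]; omega⟩, mem_insert_self _ _,
      fun h => ?_⟩
    grind
  · intro B hB
    simp only [mem_coe, mem_filter] at hB
    exact insert_erase hB.2.1
  · intro C hC
    simp only [mem_powersetCard, mem_coe] at hC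
    exact erase_insert fun h => by simpa using hC.1 h

theorem sum_powersetCard_sum_mem_sum_notMem {ι M : Type*} [Fintype ι] [DecidableEq ι]
    [AddCommMonoid M] (f : ι → ι → M) {b : ℕ} (hb : 1 ≤ b) :
    ∑ B ∈ powersetCard b (univ : Finset ι), ∑ i ∈ B, ∑ j ∈ Bᶜ, f i j =
      (Fintype.card ι - 2).choose (b - 1) • ∑ i, ∑ j ∈ univ.erase i, f i j := by
  calc ∑ B ∈ powersetCard b (univ : Finset ι), ∑ i ∈ B, ∑ j ∈ Bᶜ, f i j
      = ∑ B ∈ powersetCard b (univ : Finset ι), ∑ i, ∑ j,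
          if i ∈ B ∧ j ∉ B then f i j else 0 := by
        simp only [ite_and, ← mem_compl, sum_ite_irrel, sum_const_zero, sum_ite_mem,
          univ_inter]
    _ = ∑ i, ∑ j, #{B ∈ powersetCard b (univ : Finset ι) | i ∈ B ∧ j ∉ B} • f i j := by
        rw [sum_comm]
        refine sum_congr rfl fun i _ => ?_
        rw [sum_comm]
        exact sum_congr rfl fun j _ => by rw [← sum_filter, sum_const]
    _ = _ := by
        rw [smul_sum]
        refine sum_congr rfl fun i _ => ?_
        rw [← add_sum_erase _ _ (mem_univ i), smul_sum, filter_false_of_mem (by simp), card_empty,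
          zero_smul, zero_add]
        exact sum_congr rfl fun j hj =>
          by rw [card_powersetCard_filter_mem_and_notMem (ne_of_mem_erase hj).symm hb]

theorem Nat.choose_sub_two_mul {n b : ℕ} (hb : 1 ≤ b) (hbn : b ≤ n) (hn : 2 ≤ n) :
    (n - 2).choose (b - 1) * (n - 1) * n = n.choose b * b * (n - b) := by
  obtain ⟨m, rfl⟩ := Nat.exists_eq_add_of_le' hn
  obtain ⟨k, rfl⟩ := Nat.exists_eq_add_of_le' hb
  have h1 := Nat.choose_mul_succ_eq m k
  have h2 := Nat.add_one_mul_choose_eq (m + 1) k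
  simp only [Nat.add_sub_cancel] at h1 ⊢
  rw [show m + 2 - (k + 1) = m + 1 - k by omega, show m + 2 - 1 = m + 1 by omega, h1,
    mul_right_comm, mul_comm _ (m + 2), h2]

section
variable {ι E : Type*} [Fintype ι] [NormedAddCommGroup E] [InnerProductSpace ℝ E]

theorem sum_powersetCard_norm_sum_sq_of_sum_eq_zero {c : ι → E} (hc : ∑ i, c i = 0) {b : ℕ}
    (hb : 1 ≤ b) :
    ∑ B ∈ powersetCard b (univ : Finset ι), ‖∑ i ∈ B, c i‖ ^ 2 =
      (Fintype.card ι - 2).choose (b - 1) * ∑ i, ‖c i‖ ^ 2 := by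
  classical
  have hsq : ∀ B : Finset ι, ‖∑ i ∈ B, c i‖ ^ 2 = -∑ i ∈ B, ∑ j ∈ Bᶜ, ⟪c i, c j⟫ := fun B => by
    have hcompl : ∑ j ∈ Bᶜ, c j = -∑ i ∈ B, c i :=
      eq_neg_of_add_eq_zero_right ((sum_add_sum_compl B c).trans hc)
    have hcross : ⟪∑ i ∈ B, c i, ∑ j ∈ Bᶜ, c j⟫ = -‖∑ i ∈ B, c i‖ ^ 2 := by
      rw [hcompl, inner_neg_right, real_inner_self_eq_norm_sq]
    simp_rw [← inner_sum, ← sum_inner, hcross, neg_neg]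
  have hrow : ∀ i, ∑ j ∈ univ.erase i, ⟪c i, c j⟫ = -‖c i‖ ^ 2 := fun i => by
    rw [← inner_sum, sum_erase_eq_sub (mem_univ i), hc, zero_sub, inner_neg_right,
      real_inner_self_eq_norm_sq]
  simp_rw [hsq, sum_neg_distrib, sum_powersetCard_sum_mem_sum_notMem _ hb, hrow, sum_neg_distrib,
    nsmul_eq_mul, mul_neg, neg_neg]

theorem average_powersetCard_norm_sq_sampleMean {c : ι → E} (hc : ∑ i, c i = 0) {b : ℕ}
    (hb : 1 ≤ b) (hbn : b ≤ Fintype.card ι) :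
    ((Fintype.card ι).choose b : ℝ)⁻¹ *
        ∑ B ∈ powersetCard b (univ : Finset ι), ‖(b : ℝ)⁻¹ • ∑ i ∈ B, c i‖ ^ 2 =
      (b : ℝ)⁻¹ * (((Fintype.card ι : ℝ) - b) / ((Fintype.card ι : ℝ) - 1)) *
        ((Fintype.card ι : ℝ)⁻¹ * ∑ i, ‖c i‖ ^ 2) := by
  set n := Fintype.card ι with hn_def
  rcases Nat.lt_or_ge n 2 with hn | hn
  -- for `n = 1` the right side is `0` through `x / 0 = 0`, and indeed `c = 0`
  · have : Subsingleton ι := Fintype.card_le_one_iff_subsingleton.mp (by omega)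
    have hc0 : ∀ i, c i = 0 := fun i => by rwa [Fintype.sum_subsingleton c i] at hc
    simp [hc0]
  simp_rw [norm_smul, mul_pow, ← mul_sum, sum_powersetCard_norm_sum_sq_of_sum_eq_zero hc hb,
    Real.norm_eq_abs, sq_abs]
  have key := congrArg (Nat.cast (R := ℝ)) (Nat.choose_sub_two_mul hb hbn hn)
  push_cast [Nat.cast_sub (by omega : 1 ≤ n), Nat.cast_sub hbn] at key
  have hb0 : (b : ℝ) ≠ 0 := Nat.cast_ne_zero.mpr (by omega)
  have hn1 : (n : ℝ) - 1 ≠ 0 := by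
    have : (2 : ℝ) ≤ n := by exact_mod_cast hn
    linarith
  have hC : (n.choose b : ℝ) ≠ 0 := by exact_mod_cast (Nat.choose_pos hbn).ne'
  rw [← hn_def]
  field_simp
  linear_combination (∑ i, ‖c i‖ ^ 2) * key
end

theorem sum_sub_inv_card_smul_sum {ι F : Type*} [Fintype ι] [Nonempty ι] [AddCommGroup F]
    [Module ℝ F] (v : ι → F) : ∑ i, (v i - (Fintype.card ι : ℝ)⁻¹ • ∑ j, v j) = 0 := by
  rw [sum_sub_distrib, sum_const, card_univ, ← Nat.cast_smul_eq_nsmul ℝ, smul_smul,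
    mul_inv_cancel₀ (by exact_mod_cast Fintype.card_ne_zero), one_smul, sub_self]

/-- Variance of the memory-bank / control-variate estimator: For a uniformly
random size-`b` subset `B` of `{1, …, n}` and the estimator
`μ̂(B) = (1/b) ∑_{i∈B} a i + β (S − (1/b) ∑_{i∈B} s i)`,
`E[‖μ̂ − A‖²] = (1/b) · ((n−b)/(n−1)) · (σ_a² + β² σ_s² − 2β σ_as)`, where the expectation
is the average over all size-`b` subsets. -/
theorem stmt_13 {d n : ℕ} (a s : Fin n → EuclideanSpace ℝ (Fin d)) (β : ℝ)
    (b : ℕ) (hb1 : 1 ≤ b) (hbn : b ≤ n) :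
    ((n.choose b : ℝ))⁻¹ *
        ∑ B ∈ Finset.powersetCard b (Finset.univ : Finset (Fin n)),
          ‖((b : ℝ)⁻¹ • ∑ i ∈ B, a i +
              β • ((n : ℝ)⁻¹ • (∑ i, s i) - (b : ℝ)⁻¹ • ∑ i ∈ B, s i)) -
            (n : ℝ)⁻¹ • ∑ i, a i‖ ^ 2 =
      (b : ℝ)⁻¹ * (((n : ℝ) - (b : ℝ)) / ((n : ℝ) - 1)) *
        (((n : ℝ)⁻¹ * ∑ i, ‖a i - (n : ℝ)⁻¹ • ∑ l, a l‖ ^ 2) +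
          β ^ 2 * ((n : ℝ)⁻¹ * ∑ i, ‖s i - (n : ℝ)⁻¹ • ∑ l, s l‖ ^ 2) -
          2 * β * ((n : ℝ)⁻¹ *
            ∑ i, ⟪a i - (n : ℝ)⁻¹ • ∑ l, a l, s i - (n : ℝ)⁻¹ • ∑ l, s l⟫)) := by
  have : NeZero n := ⟨by omega⟩
  set A := (n : ℝ)⁻¹ • ∑ l, a l
  set S := (n : ℝ)⁻¹ • ∑ l, s l
  set c : Fin n → EuclideanSpace ℝ (Fin d) := fun i => (a i - A) - β • (s i - S) with hc_def
  have hc : ∑ i, c i = 0 := by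
    have ha := sum_sub_inv_card_smul_sum a
    have hs := sum_sub_inv_card_smul_sum s
    simp only [Fintype.card_fin] at ha hs
    rw [sum_sub_distrib, ← smul_sum, ha, hs, smul_zero, sub_zero]
  have hestimator : ∀ B ∈ powersetCard b (univ : Finset (Fin n)),
      ((b : ℝ)⁻¹ • ∑ i ∈ B, a i + β • (S - (b : ℝ)⁻¹ • ∑ i ∈ B, s i)) - A =
        (b : ℝ)⁻¹ • ∑ i ∈ B, c i := fun B hB => by
    have hb0 : (b : ℝ) ≠ 0 := Nat.cast_ne_zero.mpr (by omega)
    simp only [hc_def, sum_sub_distrib, ← smul_sum, sum_const, (mem_powersetCard.mp hB).2]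
    match_scalars <;> field_simp
  have hvariance : ∀ i, ‖c i‖ ^ 2 =
      ‖a i - A‖ ^ 2 + β ^ 2 * ‖s i - S‖ ^ 2 - 2 * β * ⟪a i - A, s i - S⟫ := fun i => by
    rw [hc_def, norm_sub_sq_real, real_inner_smul_right, norm_smul, mul_pow, Real.norm_eq_abs,
      sq_abs]
    ring
  have hσ := average_powersetCard_norm_sq_sampleMean hc hb1 (by simpa using hbn)
  simp only [Fintype.card_fin, hvariance, sum_sub_distrib, sum_add_distrib, ← mul_sum] at hσ
  rw [sum_congr rfl fun B hB => by rw [hestimator B hB], hσ]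
  ring
end
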